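/- Let μ be a partition and let T ∈ SSYT(μ). Then, in ℤ[x_1, x_2, …, y_1, y_2, …], one has ∏_{(i,j) ∈ D(T)} (x_i + y_j) = ∏_{(i,j) ∈ Y(μ)} (x_{T(i,j)} + y_{T(i,j)+j−i}). -/

import Mathlib

/-- A partition, stored `0`-indexed: `p.f k` is the part `λ_{k+1}`. -/
structure Partition' where
  f : ℕ → ℕ
  antitone' : ∀ ⦃i j : ℕ⦄, i ≤ j → f j ≤ f i
  eventually_zero' : ∃ N : ℕ, ∀ i : ℕ, N ≤ i → f i = 0

namespace Partition'

/-- `p.get i` is the part `λ_i` of the partition `p = λ`, for `i ≥ 1`. -/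
def get (p : Partition') (i : ℕ) : ℕ := p.f (i - 1)

/-- `μ ⊆ λ`, i.e. `μ_i ≤ λ_i` for all `i ≥ 1`. -/
def Sub (mu lam : Partition') : Prop := ∀ i : ℕ, 1 ≤ i → mu.get i ≤ lam.get i

/-- The empty partition `∅ = (0, 0, 0, …)`. -/
def empty : Partition' where
  f := fun _ => 0
  antitone' := fun _ _ _ => le_rfl
  eventually_zero' := ⟨0, fun _ _ => rfl⟩

/-- The `k`-th entry `λ^t_k = |{i ≥ 1 : λ_i ≥ k}|` of the conjugate partition
(meaningful for `k ≥ 1`). -/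
noncomputable def conjGet (p : Partition') (k : ℕ) : ℕ :=
  Set.ncard {i : ℕ | 1 ≤ i ∧ k ≤ p.get i}

/-- `Δ(λ) = {λ_i − i : i ≥ 1} ⊆ ℤ`. -/
def delta (p : Partition') : Set ℤ :=
  {d : ℤ | ∃ i : ℕ, 1 ≤ i ∧ d = (p.get i : ℤ) - (i : ℤ)}

/-- `Δ(λ^t) = {λ^t_i − i : i ≥ 1} ⊆ ℤ`. -/
noncomputable def deltaConj (p : Partition') : Set ℤ :=
  {d : ℤ | ∃ i : ℕ, 1 ≤ i ∧ d = (p.conjGet i : ℤ) - (i : ℤ)}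

/-- `μ ⋖ ν` : the partition `ν` is obtained from `μ` by increasing one entry by `1`. -/
def Covers (mu nu : Partition') : Prop :=
  ∃ k : ℕ, 1 ≤ k ∧ nu.get k = mu.get k + 1 ∧
    ∀ i : ℕ, 1 ≤ i → i ≠ k → nu.get i = mu.get i

end Partition'

/-- The skew Young diagram `Y(λ/μ)`: all boxes `(i, j)` with `i ≥ 1` and `μ_i < j ≤ λ_i`. -/
def skewCells (lam mu : Partition') : Set (ℕ × ℕ) :=
  {c : ℕ × ℕ | 1 ≤ c.1 ∧ mu.get c.1 < c.2 ∧ c.2 ≤ lam.get c.1}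

/-- The Young diagram `Y(λ) = Y(λ/∅)`. -/
def cells (lam : Partition') : Set (ℕ × ℕ) := skewCells lam Partition'.empty

/-- The hook `H_λ(c)` of a box `c` in `Y(λ)`. -/
def hook (lam : Partition') (c : ℕ × ℕ) : Set (ℕ × ℕ) :=
  {d : ℕ × ℕ | d ∈ cells lam ∧ ((d.1 = c.1 ∧ c.2 ≤ d.2) ∨ (d.2 = c.2 ∧ c.1 ≤ d.1))}

/-- The hook length `h_λ(c) = |H_λ(c)|`. -/
noncomputable def hookLength (lam : Partition') (c : ℕ × ℕ) : ℕ := (hook lam c).ncard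

/-- An excited move replaces a box `(i, j)` of the diagram `D` by `(i+1, j+1)`, provided
that none of `(i+1, j)`, `(i, j+1)`, `(i+1, j+1)` lies in `D`. -/
def ExcitedMove (D E : Set (ℕ × ℕ)) : Prop :=
  ∃ i j : ℕ, (i, j) ∈ D ∧ (i + 1, j) ∉ D ∧ (i, j + 1) ∉ D ∧ (i + 1, j + 1) ∉ D ∧
    E = insert (i + 1, j + 1) (D \ {(i, j)})

/-- `E` is an excitation of `D`: it is obtained from `D` by a finite sequence of
excited moves. -/
def IsExcitation (D E : Set (ℕ × ℕ)) : Prop := Relation.ReflTransGen ExcitedMove D E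

/-- `𝓔(λ/μ)`: the set of all excitations `E` of `Y(μ)` satisfying `E ⊆ Y(λ)`. -/
def excitations (lam mu : Partition') : Set (Set (ℕ × ℕ)) :=
  {E : Set (ℕ × ℕ) | IsExcitation (cells mu) E ∧ E ⊆ cells lam}

/-- Standard tableaux of shape `λ/μ`, encoded as functions `ℕ × ℕ → ℕ` that vanish outside
of `Y(λ/μ)`, restrict to a bijection `Y(λ/μ) → {1, …, n}` where `n = |Y(λ/μ)|`, and
increase left-to-right along rows and top-to-bottom down columns. -/
def SYT (lam mu : Partition') : Set (ℕ × ℕ → ℕ) :=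
  {T : ℕ × ℕ → ℕ |
    (∀ c : ℕ × ℕ, c ∉ skewCells lam mu → T c = 0) ∧
    Set.BijOn T (skewCells lam mu) (Set.Icc 1 (skewCells lam mu).ncard) ∧
    (∀ i j : ℕ, (i, j) ∈ skewCells lam mu → (i, j + 1) ∈ skewCells lam mu →
      T (i, j) < T (i, j + 1)) ∧
    (∀ i j : ℕ, (i, j) ∈ skewCells lam mu → (i + 1, j) ∈ skewCells lam mu →
      T (i, j) < T (i + 1, j))}

/-- Semistandard tableaux of shape `μ`, encoded as functions `ℕ × ℕ → ℕ` that vanish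
outside of `Y(μ)`, take positive values on `Y(μ)`, increase weakly along rows and
strictly down columns. -/
def SSYT (mu : Partition') : Set (ℕ × ℕ → ℕ) :=
  {T : ℕ × ℕ → ℕ |
    (∀ c : ℕ × ℕ, c ∉ cells mu → T c = 0) ∧
    (∀ c ∈ cells mu, 1 ≤ T c) ∧
    (∀ i j : ℕ, (i, j) ∈ cells mu → (i, j + 1) ∈ cells mu → T (i, j) ≤ T (i, j + 1)) ∧
    (∀ i j : ℕ, (i, j) ∈ cells mu → (i + 1, j) ∈ cells mu → T (i, j) < T (i + 1, j))}

/-- `b`-flagged semistandard tableaux of shape `μ`: all entries in row `i` are `≤ b i`. -/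
def FSSYT (mu : Partition') (b : ℕ → ℕ) : Set (ℕ × ℕ → ℕ) :=
  {T ∈ SSYT mu | ∀ c ∈ cells mu, T c ≤ b c.1}

/-- The flagging induced by `λ/μ`: `b_i = max {k ≥ 0 : λ_k − k ≥ μ_i − i}`, where
`λ_0 = +∞` (so that `k = 0` always belongs to the set). -/
noncomputable def inducedFlagging (lam mu : Partition') (i : ℕ) : ℕ :=
  sSup {k : ℕ | k = 0 ∨ (mu.get i : ℤ) - (i : ℤ) ≤ (lam.get k : ℤ) - (k : ℤ)}

/-- The diagram `D(T) = {(T(i,j), T(i,j) + j − i) : (i,j) ∈ Y(μ)}` associated to a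
semistandard tableau `T` of shape `μ` (note that `T(i,j) ≥ i` for semistandard `T`,
so the truncated subtraction is exact). -/
def excitedDiagram (mu : Partition') (T : ℕ × ℕ → ℕ) : Set (ℕ × ℕ) :=
  (fun c : ℕ × ℕ => (T c, T c + c.2 - c.1)) '' cells mu

/-- The field of rational functions over `ℚ` in the indeterminates `z_i`, `i ∈ ℤ`. -/
abbrev KK : Type := FractionRing (MvPolynomial ℤ ℚ)

/-- The indeterminate `z_i` viewed inside `KK`. -/
noncomputable def Zvar (i : ℤ) : KK :=
  algebraMap (MvPolynomial ℤ ℚ) KK (MvPolynomial.X i)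

/-- The content `c_T(k) = j − i`, where `(i, j)` is the box of `T` containing the
entry `k`. -/
noncomputable def contentOf (T : ℕ × ℕ → ℕ) (k : ℕ) : ℤ :=
  ((Classical.epsilon fun c : ℕ × ℕ => T c = k).2 : ℤ) -
    ((Classical.epsilon fun c : ℕ × ℕ => T c = k).1 : ℤ)

/-- `z_T = 1 / ∏_{k=1}^n (z_{c_T(k)} + z_{c_T(k+1)} + ⋯ + z_{c_T(n)})` for a standard
tableau `T` of shape `λ/μ`, where `n = |Y(λ/μ)|`. -/
noncomputable def zT (lam mu : Partition') (T : ℕ × ℕ → ℕ) : KK :=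
  (∏ k ∈ Finset.Icc 1 (skewCells lam mu).ncard,
    ∑ l ∈ Finset.Icc k (skewCells lam mu).ncard, Zvar (contentOf T l))⁻¹

/-- The algebraic hook length `h_λ(c; z) = Σ_{(i,j) ∈ H_λ(c)} z_{j−i}`. -/
noncomputable def hookZ (lam : Partition') (c : ℕ × ℕ) : KK :=
  ∑ᶠ d ∈ hook lam c, Zvar ((d.2 : ℤ) - (d.1 : ℤ))

/-- The polynomial ring `ℤ[x_1, x_2, …, y_1, y_2, …]`. -/
abbrev Rxy : Type := MvPolynomial (ℕ ⊕ ℕ) ℤ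

/-- The indeterminate `x_i` for `i ≥ 1`, with the convention `x_i = 0` for `i ≤ 0`. -/
noncomputable def xv (i : ℤ) : Rxy :=
  if 1 ≤ i then MvPolynomial.X (Sum.inl i.toNat) else 0

/-- The indeterminate `y_i` for `i ≥ 1`, with the convention `y_i = 0` for `i ≤ 0`. -/
noncomputable def yv (i : ℤ) : Rxy :=
  if 1 ≤ i then MvPolynomial.X (Sum.inr i.toNat) else 0

/-- `s_λ[μ] = Σ_{D ∈ 𝓔(λ/μ)} ∏_{(i,j) ∈ D} (x_i + y_j)`. -/
noncomputable def slam (lam mu : Partition') : Rxy :=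
  ∑ᶠ D ∈ excitations lam mu, ∏ᶠ c ∈ D, (xv (c.1 : ℤ) + yv (c.2 : ℤ))

/-- The `h`-polynomial `h(a, b, c) = Σ_{1 ≤ i_1 ≤ ⋯ ≤ i_a ≤ b} ∏_{j=1}^a
(x_{i_j} + y_{i_j + (j−1) + c})`, with `h(a, b, c) = 0` for `a < 0`
(and `h(0, b, c) = 1`). -/
noncomputable def hpoly (a : ℤ) (b : ℕ) (c : ℤ) : Rxy :=
  if a < 0 then 0
  else ∑ᶠ t ∈ {t : Fin a.toNat → ℕ | (∀ j, t j ∈ Finset.Icc 1 b) ∧ Monotone t},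
    ∏ j : Fin a.toNat, (xv (t j : ℤ) + yv ((t j : ℤ) + ((j : ℕ) : ℤ) + c))

/-- The element `h_{b; q}[d] = Σ_{1 ≤ i_1 ≤ ⋯ ≤ i_q ≤ b} ∏_{j=1}^q u_{i_j, j−d}` of `R`,
understood to be `0` if `q < 0` (and `1` if `q = 0`). -/
noncomputable def hGen {R : Type*} [CommRing R] (u : ℤ → ℤ → R) (b : ℕ) (q d : ℤ) : R :=
  if q < 0 then 0
  else ∑ᶠ t ∈ {t : Fin q.toNat → ℕ | (∀ j, t j ∈ Finset.Icc 1 b) ∧ Monotone t},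
    ∏ j : Fin q.toNat, u (t j : ℤ) (((j : ℕ) : ℤ) + 1 - d)

lemma mem_cells_iff (mu : Partition') (c : ℕ × ℕ) :
    c ∈ cells mu ↔ 1 ≤ c.1 ∧ 1 ≤ c.2 ∧ c.2 ≤ mu.get c.1 := by
  simp only [cells, skewCells, Partition'.empty, Set.mem_setOf_eq]
  constructor
  · rintro ⟨h1, h2, h3⟩; exact ⟨h1, by simpa [Partition'.get, Nat.one_le_iff_ne_zero, Nat.pos_iff_ne_zero] using h2, h3⟩
  · rintro ⟨h1, h2, h3⟩; exact ⟨h1, by simpa [Partition'.get, Nat.one_le_iff_ne_zero, Nat.pos_iff_ne_zero] using h2, h3⟩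

lemma row_le_T (mu : Partition') (T : ℕ × ℕ → ℕ) (hT : T ∈ SSYT mu) :
    ∀ i j : ℕ, (i, j) ∈ cells mu → i ≤ T (i, j) := by
  obtain ⟨-, hpos, -, hcol⟩ := hT
  intro i
  induction i with
  | zero => intro j _; omega
  | succ i ih =>
    intro j hij
    rcases Nat.eq_zero_or_pos i with hi | hi
    · subst hi; exact hpos _ hij
    · have hmem : (i, j) ∈ cells mu := by
        rw [mem_cells_iff] at hij ⊢
        exact ⟨hi, hij.2.1, hij.2.2.trans (mu.antitone' (by omega))⟩
      have := hcol i j hmem hij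
      have := ih j hmem
      omega

lemma diag_lt_T (mu : Partition') (T : ℕ × ℕ → ℕ) (hT : T ∈ SSYT mu) :
    ∀ k i j : ℕ, (i, j) ∈ cells mu → (i + k, j + k) ∈ cells mu →
      T (i, j) + k ≤ T (i + k, j + k) := by
  obtain ⟨-, -, hrow, hcol⟩ := hT
  intro k
  induction k with
  | zero => intro i j _ _; simp
  | succ k ih =>
    intro i j hij hk
    simp only [mem_cells_iff] at hij hk
    have hgetle : mu.get (i + k) ≥ mu.get (i + (k + 1)) := mu.antitone' (by omega)
    have hgetle' : mu.get (i + k + 1) = mu.get (i + (k + 1)) := by ring_nf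
    have hmid : (i + k, j + k) ∈ cells mu := by
      simp only [mem_cells_iff]
      exact ⟨by omega, by omega, by omega⟩
    have hmid' : (i + k + 1, j + k) ∈ cells mu := by
      simp only [mem_cells_iff]
      refine ⟨by omega, by omega, ?_⟩
      omega
    have h1 := ih i j (mem_cells_iff mu (i, j) |>.2 ⟨hij.1, hij.2.1, hij.2.2⟩)
      hmid
    have hk' : (i + (k + 1), j + (k + 1)) ∈ cells mu := by
      rw [mem_cells_iff]; exact ⟨by omega, by omega, hk.2.2⟩
    have h2 := hcol (i + k) (j + k) hmid hmid'
    have h3 := hrow (i + k + 1) (j + k) hmid' (by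
      have : (i + k + 1, j + k + 1) = (i + (k + 1), j + (k + 1)) := by ring_nf
      rw [this]; exact hk')
    have : (i + (k + 1), j + (k + 1)) = (i + k + 1, j + k + 1) := by ring_nf
    rw [this]
    omega

/-- For a semistandard tableau `T` of shape `μ`, in `ℤ[x_1, x_2, …, y_1, y_2, …]`,
one has `∏_{(i,j) ∈ D(T)} (x_i + y_j)
  = ∏_{(i,j) ∈ Y(μ)} (x_{T(i,j)} + y_{T(i,j)+j−i})`. -/
theorem excitedDiagram_weight (mu : Partition') (T : ℕ × ℕ → ℕ) (hT : T ∈ SSYT mu) :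
    (∏ᶠ c ∈ excitedDiagram mu T, (xv (c.1 : ℤ) + yv (c.2 : ℤ))) =
      ∏ᶠ c ∈ cells mu, (xv (T c : ℤ) + yv ((T c : ℤ) + (c.2 : ℤ) - (c.1 : ℤ))) := by
  have hle : ∀ c ∈ cells mu, c.1 ≤ T c := fun c hc => row_le_T mu T hT c.1 c.2 hc
  have hinj : Set.InjOn (fun c : ℕ × ℕ => (T c, T c + c.2 - c.1)) (cells mu) := by
    rintro ⟨i, j⟩ hc ⟨i', j'⟩ hc' h
    have h1 : T (i, j) = T (i', j') := congrArg Prod.fst h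
    have h2 : T (i, j) + j - i = T (i', j') + j' - i' := congrArg Prod.snd h
    have hb := hle (i, j) hc
    have hb' := hle (i', j') hc'
    simp only [] at hb hb'
    have hdiag : j + i' = j' + i := by omega
    rcases le_total i i' with hcc | hcc
    · obtain ⟨k, hk⟩ := Nat.exists_eq_add_of_le hcc
      have hk2 : j' = j + k := by omega
      have hd := diag_lt_T mu T hT k i j hc (by rw [← hk, ← hk2]; exact hc')
      rw [← hk, ← hk2] at hd
      have : k = 0 := by omega
      simp only [Prod.mk.injEq]; omega
    · obtain ⟨k, hk⟩ := Nat.exists_eq_add_of_le hcc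
      have hk2 : j = j' + k := by omega
      have hd := diag_lt_T mu T hT k i' j' hc' (by rw [← hk, ← hk2]; exact hc)
      rw [← hk, ← hk2] at hd
      have : k = 0 := by omega
      simp only [Prod.mk.injEq]; omega
  rw [excitedDiagram, finprod_mem_image hinj]
  apply finprod_mem_congr rfl
  intro c hc
  have hb := hle c hc
  congr 1
  congr 1
  omega
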